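/- For any ring R, the PP-index of R equals the supremum, over all prime two-sided ideals P of R, of the PP-index of the quotient ring R/P; that is, PPind(R) = sup_P PPind(R/P). -/

import Mathlib

/-- A two-sided ideal `P` of a ring `R` is prime if `P ≠ R` and
`aRb ⊆ P` implies `a ∈ P` or `b ∈ P`. -/
def IsPrimeTSI {R : Type*} [Ring R] (P : TwoSidedIdeal R) : Prop :=
  P ≠ ⊤ ∧ ∀ a b : R, (∀ r : R, a * r * b ∈ P) → a ∈ P ∨ b ∈ P

/-- The index of a chain `C` of prime two-sided ideals: the number (in `ℕ∞`) of
two-sided ideals which arise as unions of (nonempty) subchains of `C` and are not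
prime. -/
noncomputable def chainIndex {R : Type*} [Ring R] (C : Set (TwoSidedIdeal R)) : ℕ∞ :=
  {Q : TwoSidedIdeal R | ¬ IsPrimeTSI Q ∧
    ∃ D ⊆ C, D.Nonempty ∧ (Q : Set R) = ⋃ P ∈ D, (P : Set R)}.encard

/-- The PP-index of a ring: the supremum of the indices of all chains of prime
two-sided ideals. -/
noncomputable def PPind (R : Type*) [Ring R] : ℕ∞ :=
  ⨆ C ∈ {C : Set (TwoSidedIdeal R) | IsChain (· ≤ ·) C ∧ ∀ P ∈ C, IsPrimeTSI P},
    chainIndex C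

open Function Set

section aux
variable {R S : Type*} [Ring R] [Ring S] (f : R →+* S)

lemma mem_comap' {J : TwoSidedIdeal S} {x : R} :
    x ∈ TwoSidedIdeal.comap f J ↔ f x ∈ J := TwoSidedIdeal.mem_comap (f := f)

lemma coe_comap' (J : TwoSidedIdeal S) :
    ((TwoSidedIdeal.comap f J : TwoSidedIdeal R) : Set R) = f ⁻¹' J := by
  ext x; exact mem_comap' f

lemma comap_eq_top_iff (hf : Surjective f) {J : TwoSidedIdeal S} :
    TwoSidedIdeal.comap f J = ⊤ ↔ J = ⊤ := by
  constructor
  · intro h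
    rw [eq_top_iff]
    intro y _
    obtain ⟨x, rfl⟩ := hf y
    have : x ∈ TwoSidedIdeal.comap f J := h ▸ TwoSidedIdeal.mem_top R
    exact (mem_comap' f).1 this
  · rintro rfl
    rw [eq_top_iff]; intro x _; exact (mem_comap' f).2 (TwoSidedIdeal.mem_top S)

lemma prime_comap_iff (hf : Surjective f) {J : TwoSidedIdeal S} :
    IsPrimeTSI (TwoSidedIdeal.comap f J) ↔ IsPrimeTSI J := by
  constructor
  · rintro ⟨hne, hcond⟩
    refine ⟨fun h => hne ((comap_eq_top_iff f hf).2 h), fun a' b' h => ?_⟩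
    obtain ⟨a, rfl⟩ := hf a'
    obtain ⟨b, rfl⟩ := hf b'
    have : ∀ r : R, a * r * b ∈ TwoSidedIdeal.comap f J := fun r =>
      (mem_comap' f).2 (by simpa using h (f r))
    rcases hcond a b this with h' | h'
    · exact Or.inl ((mem_comap' f).1 h')
    · exact Or.inr ((mem_comap' f).1 h')
  · rintro ⟨hne, hcond⟩
    refine ⟨fun h => hne ((comap_eq_top_iff f hf).1 h), fun a b h => ?_⟩
    have : ∀ r' : S, f a * r' * f b ∈ J := fun r' => by
      obtain ⟨r, rfl⟩ := hf r'
      simpa using (mem_comap' f).1 (h r)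
    rcases hcond (f a) (f b) this with h' | h'
    · exact Or.inl ((mem_comap' f).2 h')
    · exact Or.inr ((mem_comap' f).2 h')

lemma comap_injective (hf : Surjective f) :
    Injective (TwoSidedIdeal.comap f) := by
  intro J₁ J₂ h
  apply SetLike.coe_injective
  have h' : f ⁻¹' (J₁ : Set S) = f ⁻¹' (J₂ : Set S) := by
    rw [← coe_comap' f J₁, ← coe_comap' f J₂, h]
  rw [← Set.image_preimage_eq (J₁ : Set S) hf, ← Set.image_preimage_eq (J₂ : Set S) hf, h']

/-- The image of a two-sided ideal under a surjective ring hom. -/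
def tsiImg (hf : Surjective f) (Q : TwoSidedIdeal R) : TwoSidedIdeal S :=
  TwoSidedIdeal.mk' (f '' Q)
    ⟨0, Q.zero_mem, map_zero f⟩
    (by rintro _ _ ⟨x, hx, rfl⟩ ⟨y, hy, rfl⟩; exact ⟨x + y, Q.add_mem hx hy, map_add f x y⟩)
    (by rintro _ ⟨x, hx, rfl⟩; exact ⟨-x, Q.neg_mem hx, map_neg f x⟩)
    (by rintro x' _ ⟨y, hy, rfl⟩
        obtain ⟨x, rfl⟩ := hf x'
        exact ⟨x * y, Q.mul_mem_left x y hy, map_mul f x y⟩)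
    (by rintro _ y' ⟨x, hx, rfl⟩
        obtain ⟨y, rfl⟩ := hf y'
        exact ⟨x * y, Q.mul_mem_right x y hx, map_mul f x y⟩)

lemma coe_tsiImg (hf : Surjective f) (Q : TwoSidedIdeal R) :
    (tsiImg f hf Q : Set S) = f '' Q :=
  TwoSidedIdeal.coe_mk' _ _ _ _ _ _

lemma comap_tsiImg (hf : Surjective f) {Q : TwoSidedIdeal R}
    (hker : TwoSidedIdeal.ker f ≤ Q) :
    TwoSidedIdeal.comap f (tsiImg f hf Q) = Q := by
  apply SetLike.coe_injective
  rw [coe_comap', coe_tsiImg]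
  ext x
  simp only [Set.mem_preimage, Set.mem_image, SetLike.mem_coe]
  constructor
  · rintro ⟨q, hq, hfq⟩
    have : x - q ∈ TwoSidedIdeal.ker f := by
      rw [TwoSidedIdeal.mem_ker, map_sub, hfq, sub_self]
    have := Q.add_mem (hker this) hq
    simpa using this
  · exact fun hx => ⟨x, hx, rfl⟩

lemma prime_tsiImg_iff (hf : Surjective f) {Q : TwoSidedIdeal R}
    (hker : TwoSidedIdeal.ker f ≤ Q) :
    IsPrimeTSI (tsiImg f hf Q) ↔ IsPrimeTSI Q := by
  rw [← prime_comap_iff f hf, comap_tsiImg f hf hker]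

/-- Pullback of a chain: chainIndex is not decreased. -/
lemma chainIndex_le_comap (hf : Surjective f) (C' : Set (TwoSidedIdeal S)) :
    chainIndex C' ≤ chainIndex ((TwoSidedIdeal.comap f) '' C') := by
  unfold chainIndex
  rw [← Set.InjOn.encard_image (f := TwoSidedIdeal.comap f)
    ((comap_injective f hf).injOn)]
  apply Set.encard_le_encard
  rintro _ ⟨Q', ⟨hnp, D', hD'C, hD'ne, hQ'⟩, rfl⟩
  refine ⟨fun h => hnp ((prime_comap_iff f hf).1 h),
    (TwoSidedIdeal.comap f) '' D', Set.image_mono hD'C, hD'ne.image _, ?_⟩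
  rw [coe_comap', hQ', Set.preimage_iUnion₂, Set.biUnion_image]
  exact Set.iUnion₂_congr fun J _ => (coe_comap' f J).symm

/-- Pushforward of a chain all of whose members contain the kernel. -/
lemma chainIndex_le_img (hf : Surjective f) (C : Set (TwoSidedIdeal R))
    (hker : ∀ Q ∈ C, TwoSidedIdeal.ker f ≤ Q) :
    chainIndex C ≤ chainIndex (tsiImg f hf '' C) := by
  unfold chainIndex
  have key : ∀ Q : TwoSidedIdeal R,
      (∃ D ⊆ C, D.Nonempty ∧ (Q : Set R) = ⋃ P ∈ D, (P : Set R)) →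
      TwoSidedIdeal.ker f ≤ Q := by
    rintro Q ⟨D, hDC, ⟨P₀, hP₀⟩, hQ⟩
    intro x hx
    have : x ∈ (P₀ : Set R) := hker P₀ (hDC hP₀) hx
    have : x ∈ (Q : Set R) := by rw [hQ]; exact Set.mem_biUnion hP₀ this
    exact this
  rw [← Set.InjOn.encard_image (f := tsiImg f hf) (fun Q₁ h₁ Q₂ h₂ h => by
    have k₁ := comap_tsiImg f hf (key Q₁ h₁.2)
    have k₂ := comap_tsiImg f hf (key Q₂ h₂.2)
    rw [← k₁, ← k₂, h])]
  apply Set.encard_le_encard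
  rintro _ ⟨Q, ⟨hnp, D, hDC, hDne, hQ⟩, rfl⟩
  have hQk : TwoSidedIdeal.ker f ≤ Q := key Q ⟨D, hDC, hDne, hQ⟩
  refine ⟨fun h => hnp ((prime_tsiImg_iff f hf hQk).1 h),
    tsiImg f hf '' D, Set.image_mono hDC, hDne.image _, ?_⟩
  rw [coe_tsiImg, hQ, Set.image_iUnion₂, Set.biUnion_image]
  exact Set.iUnion₂_congr fun P _ => (coe_tsiImg f hf P).symm

end aux

lemma le_PPind {R : Type*} [Ring R] (C : Set (TwoSidedIdeal R))
    (hC : IsChain (· ≤ ·) C ∧ ∀ P ∈ C, IsPrimeTSI P) : chainIndex C ≤ PPind R :=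
  le_iSup₂ (f := fun C (_ : C ∈ {C : Set (TwoSidedIdeal R) |
    IsChain (· ≤ ·) C ∧ ∀ P ∈ C, IsPrimeTSI P}) => chainIndex C) C hC

/-- For any ring `R`, `PPind(R)` is the supremum over prime two-sided ideals `P`
of `PPind(R/P)`. -/
theorem stmt_18 (R : Type*) [Ring R] :
    PPind R = ⨆ P : {P : TwoSidedIdeal R // IsPrimeTSI P},
      PPind P.val.ringCon.Quotient := by
  apply le_antisymm
  · -- PPind R ≤ sup
    rw [PPind]
    apply iSup₂_le
    rintro C ⟨hchain, hprime⟩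
    rcases Set.eq_empty_or_nonempty C with rfl | ⟨Q₀, hQ₀⟩
    · have : chainIndex (∅ : Set (TwoSidedIdeal R)) = 0 := by
        unfold chainIndex
        convert Set.encard_empty (α := TwoSidedIdeal R)
        ext Q
        simp only [Set.mem_setOf_eq, Set.mem_empty_iff_false, iff_false, not_and]
        rintro _ ⟨D, hD, ⟨x, hx⟩, _⟩
        exact (hD hx).elim
      rw [this]; exact zero_le
    · -- P := sInf C is prime
      set P : TwoSidedIdeal R := sInf C with hP
      have hPle : ∀ Q ∈ C, P ≤ Q := fun Q hQ => sInf_le hQ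
      have hPprime : IsPrimeTSI P := by
        constructor
        · intro h
          exact (hprime Q₀ hQ₀).1 (top_le_iff.1 (h ▸ hPle Q₀ hQ₀))
        · intro a b hab
          by_contra hcon
          push_neg at hcon
          obtain ⟨ha, hb⟩ := hcon
          rw [hP] at ha hb
          rw [TwoSidedIdeal.mem_sInf] at ha hb
          push_neg at ha hb
          obtain ⟨I, hI, haI⟩ := ha
          obtain ⟨J, hJ, hbJ⟩ := hb
          rcases hchain.total hI hJ with h | h
          · rcases (hprime I (hI)).2 a b (fun r => (TwoSidedIdeal.mem_sInf (R := R)).1 (hab r) I hI)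
              with h' | h'
            · exact haI h'
            · exact hbJ (h h')
          · rcases (hprime J (hJ)).2 a b (fun r => (TwoSidedIdeal.mem_sInf (R := R)).1 (hab r) J hJ)
              with h' | h'
            · exact haI (h h')
            · exact hbJ h'
      -- quotient map
      set f : R →+* P.ringCon.Quotient := P.ringCon.mk' with hf
      have hsurj : Function.Surjective f := fun y => Quot.inductionOn y fun x => ⟨x, rfl⟩
      have hkerf : TwoSidedIdeal.ker f = P := TwoSidedIdeal.ker_ringCon_mk' P
      have hkerC : ∀ Q ∈ C, TwoSidedIdeal.ker f ≤ Q := fun Q hQ => le_trans (le_of_eq hkerf) (hPle Q hQ)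
      have h1 : chainIndex C ≤ chainIndex (tsiImg f hsurj '' C) :=
        chainIndex_le_img f hsurj C hkerC
      have hC' : IsChain (· ≤ ·) (tsiImg f hsurj '' C) ∧
          ∀ J ∈ tsiImg f hsurj '' C, IsPrimeTSI J := by
        constructor
        · apply hchain.image_of_map_rel
          intro I J hIJ
          rw [SetLike.le_def]
          intro x hx
          rw [← SetLike.mem_coe, coe_tsiImg] at hx ⊢
          exact Set.image_mono hIJ hx
        · rintro _ ⟨Q, hQ, rfl⟩
          exact (prime_tsiImg_iff f hsurj (hkerC Q hQ)).2 (hprime Q hQ)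
      calc chainIndex C ≤ chainIndex (tsiImg f hsurj '' C) := h1
        _ ≤ PPind P.ringCon.Quotient := le_PPind _ hC'
        _ ≤ _ := le_iSup (fun P : {P : TwoSidedIdeal R // IsPrimeTSI P} =>
              PPind P.val.ringCon.Quotient) ⟨P, hPprime⟩
  · -- sup ≤ PPind R
    apply iSup_le
    rintro ⟨P, hPprime⟩
    rw [PPind]
    apply iSup₂_le
    rintro C' ⟨hchain, hprime⟩
    set f : R →+* P.ringCon.Quotient := P.ringCon.mk' with hf
    have hsurj : Function.Surjective f := fun y => Quot.inductionOn y fun x => ⟨x, rfl⟩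
    have h1 : chainIndex C' ≤ chainIndex ((TwoSidedIdeal.comap f) '' C') :=
      chainIndex_le_comap f hsurj C'
    have hC : IsChain (· ≤ ·) ((TwoSidedIdeal.comap f) '' C') ∧
        ∀ Q ∈ (TwoSidedIdeal.comap f) '' C', IsPrimeTSI Q := by
      constructor
      · apply hchain.image_of_map_rel
        intro I J hIJ
        rw [SetLike.le_def]
        intro x hx
        exact (mem_comap' f).2 (hIJ ((mem_comap' f).1 hx))
      · rintro _ ⟨J, hJ, rfl⟩
        exact (prime_comap_iff f hsurj).2 (hprime J hJ)
    exact h1.trans (le_PPind _ hC)
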